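/- Let n = 4 and let c be a parameter collection. Suppose there exist a sequence t_m → 0⁺ and unit vectors ξ_m ∈ S^3 ⊂ ℝ^4 with rank P(ξ_m, t_m c) ≤ 2 for every m (i.e., all 3×3 minors of the principal symbol vanish at ξ_m), such that ξ_m → a = (0, 0, a_3, a_4) with a_3 a_4 ≠ 0. Then c_2^{13} c_1^{24} = c_1^{23} c_2^{14}. -/

import Mathlib

/-!
Under the normalizations, `P(ξ, tc) = t P(ξ, c) + (1 - t) diag ξ`. For distinct `i, j ∉ {3, 4}`,
the column `j` of this matrix restricted to the rows `i, 3, 4` is `t` times that of `P(ξ, c)`, so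
the vanishing `3 × 3` minor on rows `i, 3, 4` and columns `j, 3, 4` stays zero after dividing
that column by `t`. Letting `t → 0` and `ξ → a` leaves a lower triangular determinant
`P(a, c)_{ij} a₃ a₄`, hence `a₃ c_i^{3j} + a₄ c_i^{4j} = 0` for `(i, j) = (1, 2), (2, 1)`.
Eliminating `a₃ / a₄` from these two equations gives the identity.
-/

open Matrix

/-- A parameter collection: `c i k j` denotes `c_i^{kj}`, symmetric in the two
superscripts, with normalizations `c_i^{ii} = 1` and `c_i^{jj} = 0` for `i ≠ j`. -/
def IsParamColl (n : ℕ) (c : Fin n → Fin n → Fin n → ℝ) : Prop :=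
  (∀ i j k : Fin n, j ≠ k → c i k j = c i j k) ∧
  (∀ i : Fin n, c i i i = 1) ∧
  (∀ i j : Fin n, i ≠ j → c i j j = 0)

/-- The principal symbol `P(ξ, c) = Σ_k ξ_k A^k`, where `(A^k)_{ij} = c_i^{kj}`. -/
def pSymb {n : ℕ} (ξ : Fin n → ℝ) (c : Fin n → Fin n → Fin n → ℝ) :
    Matrix (Fin n) (Fin n) ℝ :=
  Matrix.of fun i j => ∑ k, ξ k * c i k j

/-- The scaled parameter collection `t • c` (normalized entries unchanged). -/
def pScale {n : ℕ} (t : ℝ) (c : Fin n → Fin n → Fin n → ℝ) :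
    Fin n → Fin n → Fin n → ℝ :=
  fun i k j => if k = j then c i k j else t * c i k j

theorem Matrix.det_submatrix_eq_zero_of_rank_lt {m n k K : Type*} [Fintype n] [Fintype k]
    [DecidableEq k] [Field K] {A : Matrix m n K} (hA : A.rank < Fintype.card k)
    (r : k → m) (s : k → n) : (A.submatrix r s).det = 0 := by
  by_contra hdet
  have := (A.rank_submatrix_le r s).trans_lt hA
  rw [rank_of_det_ne_zero hdet] at this
  exact this.false

theorem Matrix.det_eq_mul_det_updateCol {k R : Type*} [Fintype k] [DecidableEq k] [CommRing R]
    (A : Matrix k k R) (b : k) (t : R) (u : k → R) (hcol : ∀ a, A a b = t * u a) :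
    A.det = t * (A.updateCol b u).det := by
  rw [← det_updateCol_smul, ← updateCol_eq_self A b]
  congr 2
  · simp
  · funext a; simp [hcol]

section ParamColl

variable {n : ℕ} {c : Fin n → Fin n → Fin n → ℝ}

@[fun_prop]
theorem continuous_pSymb (c : Fin n → Fin n → Fin n → ℝ) :
    Continuous fun ξ : Fin n → ℝ => pSymb ξ c := by
  unfold pSymb
  fun_prop

theorem pSymb_pScale (hc : IsParamColl n c) (t : ℝ) (ξ : Fin n → ℝ) :
    pSymb ξ (pScale t c) = t • pSymb ξ c + (1 - t) • diagonal ξ := by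
  ext i j
  have hdiag : ξ j * c i j j = diagonal ξ i j := by
    rcases eq_or_ne i j with rfl | hij
    · simp [hc.2.1]
    · simp [hc.2.2 i j hij, hij]
  simp only [pSymb, pScale, of_apply, Matrix.add_apply, Matrix.smul_apply, smul_eq_mul, ← hdiag]
  calc ∑ k, ξ k * (if k = j then c i k j else t * c i k j)
      = ∑ k, (t * (ξ k * c i k j) + if k = j then (1 - t) * (ξ k * c i k j) else 0) :=
        Finset.sum_congr rfl fun k _ => by split_ifs <;> ring
    _ = t * ∑ k, ξ k * c i k j + (1 - t) * (ξ j * c i j j) := by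
        rw [Finset.sum_add_distrib, ← Finset.mul_sum, Finset.sum_ite_eq']
        simp

theorem pSymb_apply_eq_zero_of_tendsto {ι : Type*} {l : Filter ι} [l.NeBot]
    (hc : IsParamColl n c) {i j p q : Fin n} (hip : i ≠ p) (hiq : i ≠ q) (hpq : p ≠ q)
    (hij : i ≠ j) (hpj : p ≠ j) (hqj : q ≠ j) {t : ι → ℝ} (ht0 : ∀ m, t m ≠ 0)
    (htlim : Filter.Tendsto t l (nhds 0)) {ξ : ι → Fin n → ℝ}
    (hrank : ∀ m, (pSymb (ξ m) (pScale (t m) c)).rank ≤ 2) {a : Fin n → ℝ}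
    (hapq : a p * a q ≠ 0) (hlim : Filter.Tendsto ξ l (nhds a)) :
    pSymb a c i j = 0 := by
  set r : Fin 3 → Fin n := ![i, p, q]
  set s : Fin 3 → Fin n := ![j, p, q]
  -- the minor on rows `r`, columns `s` of `pSymb ξ (pScale t c)`, first column divided by `t`
  let G : ℝ × (Fin n → ℝ) → ℝ := fun x =>
    (((x.1 • pSymb x.2 c + (1 - x.1) • diagonal x.2).submatrix r s).updateCol 0
      fun b => pSymb x.2 c (r b) j).det
  have hG : ∀ m, G (t m, ξ m) = 0 := by
    intro m
    have hminor := det_submatrix_eq_zero_of_rank_lt (Nat.lt_succ_of_le (hrank m)) r s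
    rw [pSymb_pScale hc, det_eq_mul_det_updateCol _ 0 (t m)] at hminor
    · exact (mul_eq_zero.mp hminor).resolve_left (ht0 m)
    · intro b
      fin_cases b <;> simp [r, s, diagonal_apply_ne _ hij, diagonal_apply_ne _ hpj,
        diagonal_apply_ne _ hqj]
  have hGcont : Continuous G := by fun_prop
  have hGlim : G (0, a) = 0 :=
    tendsto_nhds_unique ((hGcont.tendsto _).comp (htlim.prodMk_nhds hlim))
      (by simp [Function.comp_def, hG])
  have hGa : G (0, a) = pSymb a c i j * (a p * a q) := by
    simp only [G, det_fin_three, updateCol_apply, submatrix_apply]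
    simp [r, s, diagonal_apply_ne _ hip, diagonal_apply_ne _ hiq,
      diagonal_apply_ne _ hpq, diagonal_apply_ne _ hpq.symm, mul_assoc]
  exact (mul_eq_zero.mp (hGa ▸ hGlim)).resolve_right hapq

end ParamColl

theorem stmt14_general (c : Fin 4 → Fin 4 → Fin 4 → ℝ) (hc : IsParamColl 4 c)
    (t : ℕ → ℝ) (ht0 : ∀ m, 0 < t m)
    (htlim : Filter.Tendsto t Filter.atTop (nhds 0))
    (ξ : ℕ → Fin 4 → ℝ)
    (hrank : ∀ m, (pSymb (ξ m) (pScale (t m) c)).rank ≤ 2)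
    (a : Fin 4 → ℝ) (ha0 : a 0 = 0) (ha1 : a 1 = 0) (ha23 : a 2 * a 3 ≠ 0)
    (hlim : Filter.Tendsto ξ Filter.atTop (nhds a)) :
    c 1 0 2 * c 0 1 3 = c 0 1 2 * c 1 0 3 := by
  have ht : ∀ m, t m ≠ 0 := fun m => (ht0 m).ne'
  have h01 : pSymb a c 0 1 = 0 :=
    pSymb_apply_eq_zero_of_tendsto hc (by decide) (by decide) (by decide) (by decide) (by decide)
      (by decide) ht htlim hrank ha23 hlim
  have h10 : pSymb a c 1 0 = 0 :=
    pSymb_apply_eq_zero_of_tendsto hc (by decide) (by decide) (by decide) (by decide) (by decide)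
      (by decide) ht htlim hrank ha23 hlim
  simp only [pSymb, of_apply, Fin.sum_univ_four, ha0, ha1, zero_mul, zero_add] at h01 h10
  rw [hc.1 0 1 2 (by decide), hc.1 0 1 3 (by decide)] at h01
  rw [hc.1 1 0 2 (by decide), hc.1 1 0 3 (by decide)] at h10
  have ha2 : a 2 ≠ 0 := left_ne_zero_of_mul ha23
  apply mul_left_cancel₀ ha2
  linear_combination c 0 1 3 * h10 - c 1 0 3 * h01

/-- The indices 1,2,3,4 of the paper correspond to `0,1,2,3 : Fin 4`.  The
conclusion `c_2^{13} c_1^{24} = c_1^{23} c_2^{14}` reads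
`c 1 0 2 * c 0 1 3 = c 0 1 2 * c 1 0 3`. -/
theorem stmt14 (c : Fin 4 → Fin 4 → Fin 4 → ℝ) (hc : IsParamColl 4 c)
    (t : ℕ → ℝ) (ht0 : ∀ m, 0 < t m)
    (htlim : Filter.Tendsto t Filter.atTop (nhds 0))
    (ξ : ℕ → Fin 4 → ℝ) (hξunit : ∀ m, ∑ k, (ξ m k) ^ 2 = 1)
    (hrank : ∀ m, (pSymb (ξ m) (pScale (t m) c)).rank ≤ 2)
    (a : Fin 4 → ℝ) (ha0 : a 0 = 0) (ha1 : a 1 = 0) (ha23 : a 2 * a 3 ≠ 0)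
    (hlim : Filter.Tendsto ξ Filter.atTop (nhds a)) :
    c 1 0 2 * c 0 1 3 = c 0 1 2 * c 1 0 3 :=
  stmt14_general c hc t ht0 htlim ξ hrank a ha0 ha1 ha23 hlim
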